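/- Let a_n = ZFib[n] / log_φ(n) for n ≥ 2, where φ is the golden ratio and ZFib[n] is the Zimin type of the length-n prefix of the infinite Fibonacci word. Then limsup_{n→∞} a_n = 1/2. -/

import Mathlib

open List Filter

/-- The Zimin pattern `Z_k` as a word over variables `0, 1, ..., k-1`
(`Z_0` is empty, `Z_{k+1} = Z_k · x_{k+1} · Z_k`). -/
def ziminWord : ℕ → List ℕ
  | 0 => []
  | k + 1 => ziminWord k ++ k :: ziminWord k

/-- `w` is the image of the Zimin pattern `Z_k` under a non-erasing morphism. -/
def IsZiminImage {α : Type*} (k : ℕ) (w : List α) : Prop :=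
  ∃ h : ℕ → List α, (∀ i, h i ≠ []) ∧ w = (ziminWord k).flatMap h

/-- The Zimin type of `w`: the maximum `k` such that `w` is an image of `Z_k`
under a non-erasing morphism (0 for the empty word). -/
noncomputable def ziminType {α : Type*} (w : List α) : ℕ :=
  sSup {k | IsZiminImage k w}

/-- The Zimin pattern `Z_k` embeds in `w`: some factor of `w` is an image of `Z_k`. -/
def ziminEmbeds {α : Type*} (k : ℕ) (w : List α) : Prop :=
  ∃ u : List α, u <:+: w ∧ IsZiminImage k u

/-- Length of the longest border (proper prefix that is also a proper suffix) of `w`. -/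
noncomputable def bordLen {α : Type*} (w : List α) : ℕ :=
  sSup {j | w.take j <:+ w ∧ j < w.length}

/-- Length of the longest short border (border of length `< |w|/2`) of `w`. -/
noncomputable def shortBordLen {α : Type*} (w : List α) : ℕ :=
  sSup {j | w.take j <:+ w ∧ 2 * j < w.length}

/-- The longest border of `w`. -/
noncomputable def bord {α : Type*} (w : List α) : List α := w.take (bordLen w)

/-- The longest short border of `w`. -/
noncomputable def shortBord {α : Type*} (w : List α) : List α := w.take (shortBordLen w)

/-- The Fibonacci words over `Bool` (`a = false`, `b = true`), with
`fibWord 0 = F_0 = a`, `fibWord 1 = F_1 = F_0 F_{-1} = ab`, `F_{n} = F_{n-1} F_{n-2}`. -/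
def fibWord : ℕ → List Bool
  | 0 => [false]
  | 1 => [false, true]
  | n + 2 => fibWord (n + 1) ++ fibWord n

/-- The Fibonacci numbers `Φ_n = |F_n|` (`Φ_0 = 1, Φ_1 = 2, Φ_2 = 3, ...`). -/
def Phi (n : ℕ) : ℕ := (fibWord n).length

/-- The infinite Fibonacci word `F_∞` (0-indexed letters). -/
def fibInf (i : ℕ) : Bool := (fibWord (i + 2)).getD i false

/-- The prefix `F_∞[1..n]` of the infinite Fibonacci word. -/
def fibPrefix (n : ℕ) : List Bool := (List.range n).map fibInf


/-- The golden ratio `φ = (1 + √5)/2`. -/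
noncomputable def goldenR : ℝ := (1 + Real.sqrt 5) / 2

/-- The sequence `a_n = ZFib[n] / log_φ n`, where `ZFib[n]` is the Zimin type of
the length-`n` prefix of the infinite Fibonacci word. -/
noncomputable def aseq (n : ℕ) : ℝ :=
  (ziminType (fibPrefix n) : ℝ) / (Real.log n / Real.log goldenR)

/-!
Lower bound: `F_{2m+2} = F_{2m} F_{2m-1} F_{2m}`, so `F_{2m}` is an image of `Z_{m+1}`, while
`log_φ Φ_{2m} ≤ 2m + 1`.

Upper bound: if a prefix of `F_∞` is an image `B u B` of `Z_{k+1}`, then `|B u|` is a period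
of it exceeding `|B|`. The prefix of length `Φ_{i+2} - 2` has period `Φ_i`, so by the Fine–Wilf
theorem a period strictly between `Φ_i` and `Φ_{i+1}` on a long enough prefix would make a proper
divisor of `Φ_i` a period, which is impossible since prefixes of length `≥ Φ_{i+2}` have no
positive period below `Φ_i`. Hence `|B| < Φ_i` whenever the prefix is shorter than `Φ_{i+2}`, and
induction on `k` gives `2 ZFib[n] ≤ j + 1` for `n < Φ_j`, that is `ZFib[n] ≤ (log_φ n)/2 + 1`.
-/

theorem lt_of_mem_ziminWord {k i : ℕ} (h : i ∈ ziminWord k) : i < k := by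
  induction k with
  | zero => simp [ziminWord] at h
  | succ k ih =>
    simp only [ziminWord, mem_append, mem_cons] at h
    rcases h with h | rfl | h <;> grind

theorem isZiminImage_succ_iff {α : Type*} {k : ℕ} {w : List α} :
    IsZiminImage (k + 1) w ↔ ∃ B u, IsZiminImage k B ∧ u ≠ [] ∧ w = B ++ u ++ B := by
  constructor
  · rintro ⟨h, hne, rfl⟩
    exact ⟨_, h k, ⟨h, hne, rfl⟩, hne k, by simp [ziminWord]⟩
  · rintro ⟨_, u, ⟨h, hne, rfl⟩, hu, rfl⟩
    classical
    refine ⟨Function.update h k u, fun i => ?_, ?_⟩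
    · rcases eq_or_ne i k with rfl | hik <;> simp [*]
    have hZ : (ziminWord k).flatMap (Function.update h k u) = (ziminWord k).flatMap h :=
      flatMap_congr fun i hi => Function.update_of_ne (lt_of_mem_ziminWord hi).ne _ _
    simp [ziminWord, hZ]

theorem IsZiminImage.le_length {α : Type*} {k : ℕ} {w : List α} (h : IsZiminImage k w) :
    k ≤ w.length := by
  induction k generalizing w with
  | zero => exact Nat.zero_le _
  | succ k ih =>
    obtain ⟨B, u, hB, hu, rfl⟩ := isZiminImage_succ_iff.mp h
    have := length_pos_iff.mpr hu
    have := ih hB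
    simp only [length_append]
    omega

theorem IsZiminImage.le_ziminType {α : Type*} {k : ℕ} {w : List α} (h : IsZiminImage k w) :
    k ≤ ziminType w :=
  le_csSup ⟨w.length, fun _ hk => hk.le_length⟩ h

theorem Phi_add_two (n : ℕ) : Phi (n + 2) = Phi (n + 1) + Phi n := by
  simp [Phi, fibWord]

theorem Phi_pos (n : ℕ) : 0 < Phi n := by
  induction n using Nat.twoStepInduction with
  | zero | one => decide
  | more n _ ih => rw [Phi_add_two]; omega

theorem Phi_strictMono : StrictMono Phi :=
  strictMono_nat_of_lt_succ fun
    | 0 => by decide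
    | n + 1 => by rw [Phi_add_two]; have := Phi_pos n; omega

theorem lt_Phi (n : ℕ) : n < Phi n := by
  induction n with
  | zero => decide
  | succ n ih => have := Phi_strictMono (Nat.lt_add_one n); omega

theorem fibWord_prefix_fibWord {m n : ℕ} (h : m ≤ n) : fibWord m <+: fibWord n := by
  induction n, h using Nat.le_induction with
  | base => exact prefix_rfl
  | succ n _ ih =>
    refine ih.trans ?_
    rcases n with _ | n
    · exact ⟨[true], rfl⟩
    · exact prefix_append _ _

theorem fibInf_eq_getElem {i k : ℕ} (h : i < Phi k) : fibInf i = (fibWord k)[i]'h := by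
  have hi : i < Phi (i + 2) := (lt_Phi i).trans (Phi_strictMono (by omega))
  rw [fibInf, getD_eq_getElem _ _ hi]
  rcases le_total k (i + 2) with hk | hk
  · exact ((fibWord_prefix_fibWord hk).getElem h).symm
  · exact (fibWord_prefix_fibWord hk).getElem hi

@[simp]
theorem fibPrefix_length (n : ℕ) : (fibPrefix n).length = n := by simp [fibPrefix]

theorem fibPrefix_eq_take {n k : ℕ} (h : n ≤ Phi k) : fibPrefix n = (fibWord k).take n := by
  refine ext_getElem (by rw [fibPrefix_length, length_take]; exact (min_eq_left h).symm)
    fun i h₁ _ => ?_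
  simp only [fibPrefix, getElem_map, getElem_range, getElem_take]
  exact fibInf_eq_getElem _

theorem fibPrefix_Phi (k : ℕ) : fibPrefix (Phi k) = fibWord k := by
  rw [fibPrefix_eq_take le_rfl, Phi, take_length]

theorem take_fibPrefix {m n : ℕ} (h : m ≤ n) : (fibPrefix n).take m = fibPrefix m := by
  rw [fibPrefix_eq_take (lt_Phi n).le, take_take, min_eq_left h,
    fibPrefix_eq_take (h.trans (lt_Phi n).le)]

theorem List.HasPeriod.fibPrefix_of_le {n m p : ℕ} (h : (fibPrefix n).HasPeriod p)
    (hmn : m ≤ n) : (fibPrefix m).HasPeriod p :=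
  h.infix (take_fibPrefix hmn ▸ take_prefix m _).isInfix

theorem take_fibWord_append_comm (j : ℕ) :
    (fibWord (j + 1) ++ fibWord j).take (Phi (j + 2) - 2) =
      (fibWord j ++ fibWord (j + 1)).take (Phi (j + 2) - 2) := by
  induction j with
  | zero => decide
  | succ j ih =>
    have hlen : Phi (j + 3) - 2 = (fibWord (j + 1)).length + (Phi (j + 2) - 2) := by
      have h₁ : Phi (j + 3) = Phi (j + 2) + Phi (j + 1) := Phi_add_two (j + 1)
      have h₂ := Phi_strictMono (show j + 1 < j + 2 by omega)
      have h₃ := lt_Phi (j + 1)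
      change _ = Phi (j + 1) + _; omega
    have e : fibWord (j + 2) = fibWord (j + 1) ++ fibWord j := rfl
    rw [show j + 1 + 2 = j + 3 from rfl, hlen, e, append_assoc, take_length_add_append,
      take_length_add_append, ih]

theorem hasPeriod_fibPrefix_Phi (j : ℕ) : (fibPrefix (Phi (j + 2) - 2)).HasPeriod (Phi j) := by
  have hjL : Phi j ≤ Phi (j + 2) - 2 := by
    have := lt_Phi (j + 1); rw [Phi_add_two]; omega
  have hw : fibPrefix (Phi (j + 2) - 2) =
      (fibWord j ++ fibWord (j + 1)).take (Phi (j + 2) - 2) := by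
    rw [← take_fibWord_append_comm, fibPrefix_eq_take (Nat.sub_le _ _)]; rfl
  rw [List.HasPeriod, hw, take_take, min_eq_left hjL, take_left' (i := Phi j) rfl]
  calc (fibWord j ++ fibWord (j + 1)).take (Phi (j + 2) - 2)
      <+: (fibWord j ++ fibWord (j + 1) ++ fibWord j).take (Phi j + (Phi (j + 2) - 2)) :=
        ((prefix_append _ _).take _).trans (take_prefix_take_left (by omega))
    _ = fibWord j ++ (fibWord j ++ fibWord (j + 1)).take (Phi (j + 2) - 2) := by
        rw [← take_fibWord_append_comm, append_assoc]; exact take_length_add_append _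

theorem Nat.two_mul_le_of_dvd_of_lt {d n : ℕ} (hd : d ∣ n) (hdn : d < n) : 2 * d ≤ n := by
  obtain ⟨c, rfl⟩ := hd
  rcases c with _ | _ | c
  · simp at hdn
  · simp at hdn
  · nlinarith

theorem not_hasPeriod_fibPrefix {i q n : ℕ} (hq : 0 < q) (hqi : q < Phi (i + 1))
    (hn : Phi (i + 3) ≤ n) : ¬ (fibPrefix n).HasPeriod q := by
  induction i generalizing q n with
  | zero =>
    obtain rfl : q = 1 := by change q < 2 at hqi; omega
    intro h
    have h₂ := h.fibPrefix_of_le (le_trans (by decide : 2 ≤ Phi 3) hn)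
    rw [List.HasPeriod] at h₂
    revert h₂
    decide
  | succ i ih =>
    change q < Phi (i + 2) at hqi
    change Phi (i + 4) ≤ n at hn
    have hF₄ : Phi (i + 4) = Phi (i + 3) + Phi (i + 2) := Phi_add_two (i + 2)
    have hF₃ : Phi (i + 3) = Phi (i + 2) + Phi (i + 1) := Phi_add_two (i + 1)
    have hF₂ : Phi (i + 2) = Phi (i + 1) + Phi i := Phi_add_two i
    have hF₁ := Phi_strictMono (Nat.lt_add_one i)
    have hF₀ := Phi_pos i
    intro h
    have hg := (hasPeriod_fibPrefix_Phi (i + 2)).gcd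
      (h.fibPrefix_of_le (by change Phi (i + 4) - 2 ≤ n; omega))
      (by change _ ≤ (fibPrefix (Phi (i + 4) - 2)).length; rw [fibPrefix_length]; omega)
    have := Nat.two_mul_le_of_dvd_of_lt (Nat.gcd_dvd_left (Phi (i + 2)) q)
      ((Nat.gcd_le_right _ hq).trans_lt hqi)
    exact ih (Nat.gcd_pos_of_pos_right _ hq) (by omega) (by change _ ≤ Phi (i + 4) - 2; omega) hg

theorem add_lt_of_hasPeriod_fibPrefix {i n p : ℕ} (h : (fibPrefix n).HasPeriod p)
    (hip : Phi i < p) (hpi : p < Phi (i + 1)) : n < p + Phi i := by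
  match i with
  | 0 => change 1 < p at hip; change p < 2 at hpi; omega
  | 1 => change 2 < p at hip; change p < 3 at hpi; omega
  | i + 2 =>
    change p < Phi (i + 3) at hpi
    have hF₄ : Phi (i + 4) = Phi (i + 3) + Phi (i + 2) := Phi_add_two (i + 2)
    have hF₃ : Phi (i + 3) = Phi (i + 2) + Phi (i + 1) := Phi_add_two (i + 1)
    have hF₂ : Phi (i + 2) = Phi (i + 1) + Phi i := Phi_add_two i
    have hF₁ := Phi_strictMono (Nat.lt_add_one i)
    have hF₀ := Phi_pos i
    by_contra! hn
    set g := Nat.gcd (Phi (i + 2)) p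
    have hg0 : 0 < g := Nat.gcd_pos_of_pos_left p (Phi_pos _)
    have hg := ((hasPeriod_fibPrefix_Phi (i + 2)).fibPrefix_of_le
      (show p + Phi (i + 2) - 1 ≤ Phi (i + 4) - 2 by omega)).gcd
      (h.fibPrefix_of_le (show p + Phi (i + 2) - 1 ≤ n by omega))
      (by rw [fibPrefix_length]; omega)
    have hgp : g < Phi (i + 2) := by
      refine (Nat.gcd_le_left _ (Phi_pos _)).lt_of_ne fun heq => ?_
      have := Nat.le_of_dvd (by omega) (Nat.dvd_sub (heq ▸ Nat.gcd_dvd_right _ p) dvd_rfl)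
      omega
    have := Nat.two_mul_le_of_dvd_of_lt (Nat.gcd_dvd_left _ _) hgp
    exact not_hasPeriod_fibPrefix (i := i) hg0 (by omega) (by omega) hg

theorem sub_lt_of_hasPeriod_fibPrefix {i n p : ℕ} (h : (fibPrefix n).HasPeriod p)
    (hnp : n < 2 * p) (hn : n < Phi (i + 2)) : n - p < Phi i := by
  by_contra! hb
  have := Phi_add_two i
  have := Phi_pos i
  have := add_lt_of_hasPeriod_fibPrefix (i := i) h (by omega) (by omega)
  omega

theorem List.hasPeriod_append_of_prefix {α : Type*} {x v : List α} (h : x <+: v) :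
    (v ++ x).HasPeriod v.length := by
  rw [List.HasPeriod, take_left' rfl, prefix_append_right_inj]
  exact h.trans (prefix_append v x)

theorem two_mul_le_of_isZiminImage_fibPrefix {k n j : ℕ} (hk : IsZiminImage k (fibPrefix n))
    (hn : n < Phi j) : 2 * k ≤ j + 1 := by
  induction k generalizing n j with
  | zero => omega
  | succ k ih =>
    obtain ⟨B, u, hB, hu, hw⟩ := isZiminImage_succ_iff.mp hk
    have hlen : n = B.length + u.length + B.length := by
      simpa [add_assoc] using congrArg length hw
    have hu₀ := length_pos_iff.mpr hu
    have hBn : fibPrefix B.length = B := by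
      rw [← take_fibPrefix (n := n) (by omega), hw, append_assoc, take_left' rfl]
    have hper : (fibPrefix n).HasPeriod (B ++ u).length :=
      hw ▸ hasPeriod_append_of_prefix (prefix_append B u)
    have h₀ : Phi 0 = 1 := rfl
    have hb : B.length < Phi (j - 2) := by
      rcases lt_or_ge j 2 with hj | hj
      -- here `j - 2 = 0` and the prefix is too short for `B` to be nonempty
      · have : Phi j ≤ Phi 1 := Phi_strictMono.monotone (by omega)
        change Phi j ≤ 2 at this
        rw [show j - 2 = 0 by omega]
        omega
      · obtain ⟨i, rfl⟩ : ∃ i, j = i + 2 := ⟨j - 2, by omega⟩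
        have := sub_lt_of_hasPeriod_fibPrefix hper (by rw [length_append]; omega) hn
        simp only [length_append] at this
        rw [Nat.add_sub_cancel]
        omega
    have := ih (by rwa [hBn]) hb
    have : j ≠ 0 := by rintro rfl; omega
    omega

theorem isZiminImage_fibWord (m : ℕ) : IsZiminImage (m + 1) (fibWord (2 * m)) := by
  induction m with
  | zero => exact ⟨fun _ => [false], by simp, rfl⟩
  | succ m ih =>
    obtain ⟨s, hs⟩ := fibWord_prefix_fibWord (Nat.le_add_right (2 * m) 1)
    have hs₀ : s ≠ [] := by
      rintro rfl
      have := congrArg length hs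
      exact (Phi_strictMono (Nat.lt_add_one (2 * m))).ne (by simpa [Phi] using this)
    refine isZiminImage_succ_iff.mpr ⟨_, s, ih, hs₀, ?_⟩
    change fibWord (2 * m + 1) ++ fibWord (2 * m) = _
    rw [← hs]

theorem two_mul_ziminType_fibPrefix_le {n j : ℕ} (hn : n < Phi j) :
    2 * ziminType (fibPrefix n) ≤ j + 1 := by
  have : ziminType (fibPrefix n) ≤ (j + 1) / 2 :=
    csSup_le' fun k hk => by have := two_mul_le_of_isZiminImage_fibPrefix hk hn; omega
  omega

theorem le_ziminType_fibPrefix_Phi (m : ℕ) : m + 1 ≤ ziminType (fibPrefix (Phi (2 * m))) :=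
  fibPrefix_Phi (2 * m) ▸ (isZiminImage_fibWord m).le_ziminType

open Real Topology
open scoped goldenRatio

theorem goldenRatio_pow_le_Phi : ∀ j : ℕ, φ ^ j ≤ Phi j
  | 0 => by norm_num [show Phi 0 = 1 from rfl]
  | 1 => by norm_num [show Phi 1 = 2 from rfl, goldenRatio_lt_two.le]
  | j + 2 => by
    rw [Phi_add_two]
    push_cast
    linarith [goldenRatio_pow_le_Phi j, goldenRatio_pow_le_Phi (j + 1),
      goldenRatio_pow_sub_goldenRatio_pow j]

theorem Phi_le_goldenRatio_pow : ∀ j : ℕ, (Phi j : ℝ) ≤ φ ^ (j + 1)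
  | 0 => by norm_num [show Phi 0 = 1 from rfl, one_lt_goldenRatio.le]
  | 1 => by norm_num [show Phi 1 = 2 from rfl, goldenRatio_sq]; linarith [one_lt_goldenRatio]
  | j + 2 => by
    rw [Phi_add_two]
    push_cast
    linarith [Phi_le_goldenRatio_pow j, Phi_le_goldenRatio_pow (j + 1),
      goldenRatio_pow_sub_goldenRatio_pow (j + 1)]

theorem aseq_eq (n : ℕ) : aseq n = ziminType (fibPrefix n) / logb φ n := rfl

theorem aseq_le {n : ℕ} (hn : 2 ≤ n) : aseq n ≤ 1 / 2 + (logb φ n)⁻¹ := by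
  have hL : 0 < logb φ n := logb_pos one_lt_goldenRatio (by exact_mod_cast hn)
  have hj : n < Phi (⌊logb φ n⌋₊ + 1) := by
    have : (n : ℝ) < φ ^ (⌊logb φ n⌋₊ + 1) := by
      rw [← rpow_natCast, ← logb_lt_iff_lt_rpow one_lt_goldenRatio (by positivity)]
      push_cast
      exact Nat.lt_floor_add_one _
    exact_mod_cast this.trans_le (goldenRatio_pow_le_Phi _)
  have hZ : 2 * (ziminType (fibPrefix n) : ℝ) ≤ ⌊logb φ n⌋₊ + 2 := by
    exact_mod_cast two_mul_ziminType_fibPrefix_le hj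
  have := Nat.floor_le hL.le
  rw [aseq_eq, div_le_iff₀ hL, add_mul, inv_mul_cancel₀ hL.ne']
  linarith

theorem one_half_le_aseq_Phi {m : ℕ} (hm : 0 < m) : 1 / 2 ≤ aseq (Phi (2 * m)) := by
  have hΦ : (1 : ℝ) < Phi (2 * m) := by exact_mod_cast (show 1 < 2 * m by omega).trans (lt_Phi _)
  have hL : 0 < logb φ (Phi (2 * m)) := logb_pos one_lt_goldenRatio hΦ
  have hL' : logb φ (Phi (2 * m)) ≤ 2 * m + 1 := by
    rw [logb_le_iff_le_rpow one_lt_goldenRatio (by positivity)]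
    exact_mod_cast Phi_le_goldenRatio_pow (2 * m)
  have hZ : (m : ℝ) + 1 ≤ ziminType (fibPrefix (Phi (2 * m))) := by
    exact_mod_cast le_ziminType_fibPrefix_Phi m
  rw [aseq_eq, le_div_iff₀ hL]
  linarith

theorem Filter.Tendsto.limsup_eq_of_eventuallyLE_of_frequently_le {ι β : Type*}
    [ConditionallyCompleteLinearOrder β] [TopologicalSpace β] [OrderTopology β]
    {f : Filter ι} [f.NeBot] {u v : ι → β} {a : β} (hv : Tendsto v f (𝓝 a))
    (huv : u ≤ᶠ[f] v) (hu : ∃ᶠ i in f, a ≤ u i) : limsup u f = a :=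
  le_antisymm
    ((limsup_le_limsup huv (.of_frequently_ge hu) hv.isBoundedUnder_le).trans hv.limsup_eq.le)
    (le_limsup_of_frequently_le hu (hv.isBoundedUnder_le.mono_le huv))

/-- Corollary 1 (part): `limsup_{n→∞} ZFib[n] / log_φ n = 1/2`. -/
theorem limsup_aseq : Filter.limsup aseq Filter.atTop = 1 / 2 := by
  have hv : Tendsto (fun n : ℕ => 1 / 2 + (logb φ n)⁻¹) atTop (𝓝 (1 / 2)) := by
    simpa using ((tendsto_logb_atTop one_lt_goldenRatio).comp
      tendsto_natCast_atTop_atTop).inv_tendsto_atTop.const_add (1 / 2 : ℝ)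
  refine hv.limsup_eq_of_eventuallyLE_of_frequently_le
    (eventually_atTop.mpr ⟨2, fun n => aseq_le⟩) (frequently_atTop.mpr fun N => ?_)
  exact ⟨Phi (2 * (N + 1)), by have := lt_Phi (2 * (N + 1)); omega,
    one_half_le_aseq_Phi N.succ_pos⟩
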